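/- Let y = Mx + e where M satisfies the D-RIP with constants δ_{3ζk} and δ_{(3ζ+1)k} < 1, where x = Dα with α k-sparse supported on T. Let T̃ be an index set with |T̃| ≤ 3ζk and let x_p be the least-squares solution x_p = D(MD_{T̃})^† y. Then ‖x_p − x‖₂ ≤ (1/√(1 − δ_{(3ζ+1)k}²)) ‖Q_{T̃}(x_p − x)‖₂ + (√(1+δ_{3ζk})/(1 − δ_{(3ζ+1)k})) ‖e‖₂. -/

import Mathlib

/-!
Write `u = x_p - x` and `p = P_{T̃} u`. Both are `D`-images of `(3ζ+1)k`-sparse vectors, so the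
`D`-RIP polarizes to `|⟪M p, M u⟫ - ⟪p, u⟫| ≤ δ_{(3ζ+1)k} ‖p‖ ‖u‖`. Since `M u = e - (y - M x_p)`
and the least-squares residual `y - M x_p` is orthogonal to `M p`, we get
`‖p‖² = ⟪p, u⟫ ≤ δ_{(3ζ+1)k} ‖p‖ ‖u‖ + √(1 + δ_{3ζk}) ‖p‖ ‖e‖`, i.e.
`‖p‖ ≤ δ_{(3ζ+1)k} ‖u‖ + √(1 + δ_{3ζk}) ‖e‖`. Solving `‖u‖² = ‖u - p‖² + ‖p‖²` for `‖u‖` under this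
constraint gives the bound.
-/

/-- `P_T`: orthogonal projection of `ℝ^d` onto the span of the columns of `D` indexed by `T`. -/
noncomputable def projSpan {d n : ℕ}
    (D : EuclideanSpace ℝ (Fin n) →L[ℝ] EuclideanSpace ℝ (Fin d)) (T : Finset (Fin n)) :
    EuclideanSpace ℝ (Fin d) →L[ℝ] EuclideanSpace ℝ (Fin d) :=
  (Submodule.span ℝ ((fun i => D (EuclideanSpace.single i 1)) '' (T : Set (Fin n)))).subtypeL.comp
    (Submodule.orthogonalProjectionOnto _)

open RealInnerProductSpace

section Polarization

variable {E F : Type*} [NormedAddCommGroup E] [InnerProductSpace ℝ E]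
  [NormedAddCommGroup F] [InnerProductSpace ℝ F] {M : E →L[ℝ] F} {V : Submodule ℝ E} {δ : ℝ}

lemma inner_map_sub_inner_le (h : ∀ v ∈ V, |‖M v‖ ^ 2 - ‖v‖ ^ 2| ≤ δ * ‖v‖ ^ 2)
    {v w : E} (hv : v ∈ V) (hw : w ∈ V) :
    ⟪M v, M w⟫ - ⟪v, w⟫ ≤ δ * (‖v‖ ^ 2 + ‖w‖ ^ 2) / 2 := by
  have hadd := abs_le.1 (h (v + w) (V.add_mem hv hw))
  have hsub := abs_le.1 (h (v - w) (V.sub_mem hv hw))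
  rw [map_add, norm_add_sq_real, norm_add_sq_real] at hadd
  rw [map_sub, norm_sub_sq_real, norm_sub_sq_real] at hsub
  nlinarith [hadd.2, hsub.1]

lemma abs_inner_map_sub_inner_le (h : ∀ v ∈ V, |‖M v‖ ^ 2 - ‖v‖ ^ 2| ≤ δ * ‖v‖ ^ 2)
    {v w : E} (hv : v ∈ V) (hw : w ∈ V) :
    |⟪M v, M w⟫ - ⟪v, w⟫| ≤ δ * (‖v‖ * ‖w‖) := by
  rcases eq_or_ne v 0 with rfl | hv0
  · simp
  rcases eq_or_ne w 0 with rfl | hw0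
  · simp
  have hpos : 0 < ‖v‖ * ‖w‖ := by positivity
  -- Rescaling `v` and `w` to equal norms turns the AM–GM-type bound into the product bound.
  have key : ∀ w' ∈ V, ‖w'‖ = ‖w‖ → ⟪M v, M w'⟫ - ⟪v, w'⟫ ≤ δ * (‖v‖ * ‖w‖) := by
    intro w' hw' hnorm
    have := inner_map_sub_inner_le h (V.smul_mem ‖w‖ hv) (V.smul_mem ‖v‖ hw')
    simp only [map_smul, real_inner_smul_left, real_inner_smul_right, norm_smul, norm_norm,
      hnorm] at this
    refine le_of_mul_le_mul_left ?_ hpos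
    nlinarith
  refine abs_le.2 ⟨?_, key w hw rfl⟩
  have := key (-w) (V.neg_mem hw) (norm_neg w)
  simp only [map_neg, inner_neg_right] at this
  linarith

end Polarization

lemma inner_sub_eq_zero_of_forall_norm_sub_le {F : Type*} [NormedAddCommGroup F]
    [InnerProductSpace ℝ F] {K : Submodule ℝ F} {u v : F} (hv : v ∈ K)
    (hmin : ∀ w ∈ K, ‖u - v‖ ≤ ‖u - w‖) {w : F} (hw : w ∈ K) : ⟪u - v, w⟫ = 0 :=
  (K.norm_eq_iInf_iff_real_inner_eq_zero hv).1
    (le_antisymm (le_ciInf fun w' => hmin w' w'.2)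
      (ciInf_le (f := fun w' : K => ‖u - w'‖)
        ⟨0, Set.forall_mem_range.2 fun _ => norm_nonneg _⟩ ⟨v, hv⟩)) w hw

lemma norm_le_of_inner_sub_eq_zero {E : Type*} [NormedAddCommGroup E] [InnerProductSpace ℝ E]
    {u p : E} {δ C : ℝ} (hδ0 : 0 ≤ δ) (hδ1 : δ < 1) (hC : 0 ≤ C) (horth : ⟪u - p, p⟫ = 0)
    (hp : ‖p‖ ^ 2 ≤ ‖p‖ * (δ * ‖u‖ + C)) :
    ‖u‖ ≤ 1 / √(1 - δ ^ 2) * ‖u - p‖ + C / (1 - δ) := by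
  have hpyth : ‖u‖ ^ 2 = ‖u - p‖ ^ 2 + ‖p‖ ^ 2 := by
    simpa [sq] using norm_add_sq_eq_norm_sq_add_norm_sq_real horth
  have hp' : ‖p‖ ≤ δ * ‖u‖ + C := by
    nlinarith [norm_nonneg p, mul_nonneg hδ0 (norm_nonneg u)]
  have h1δ : 0 < 1 - δ := by linarith
  have hs : 0 < 1 - δ ^ 2 := by nlinarith
  rcases le_or_gt ‖u‖ (C / (1 - δ)) with hu | hu
  · have : 0 ≤ 1 / √(1 - δ ^ 2) * ‖u - p‖ := by positivity
    linarith
  set t := ‖u‖ - C / (1 - δ) with ht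
  have ht0 : 0 < t := by linarith
  have htC : C = (1 - δ) * (‖u‖ - t) := by rw [ht]; field_simp; ring
  -- With `C = (1 - δ)(‖u‖ - t)`, Pythagoras and `‖p‖ ≤ δ‖u‖ + C` give `(1 - δ²) t² ≤ ‖u - p‖²`.
  have hsq : (√(1 - δ ^ 2) * t) ^ 2 ≤ ‖u - p‖ ^ 2 := by
    rw [mul_pow, Real.sq_sqrt hs.le]
    nlinarith [norm_nonneg p, mul_nonneg hC ht0.le]
  have hle : √(1 - δ ^ 2) * t ≤ ‖u - p‖ :=
    (pow_le_pow_iff_left₀ (by positivity) (norm_nonneg _) two_ne_zero).1 hsq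
  have : t ≤ 1 / √(1 - δ ^ 2) * ‖u - p‖ := by
    rw [one_div_mul_eq_div, le_div_iff₀ (Real.sqrt_pos.2 hs)]
    linarith
  linarith

namespace EuclideanSpace

variable {ι : Type*}

def supportedOn (T : Finset ι) : Submodule ℝ (EuclideanSpace ℝ ι) where
  carrier := {β | ∀ i ∉ T, β i = 0}
  add_mem' {β γ} hβ hγ i hi := by simp [hβ i hi, hγ i hi]
  zero_mem' _ _ := rfl
  smul_mem' c β hβ i hi := by simp [hβ i hi]

lemma supportedOn_mono {S T : Finset ι} (h : S ⊆ T) : supportedOn S ≤ supportedOn T :=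
  fun _ hβ i hi => hβ i fun hS => hi (h hS)

lemma span_single_le_supportedOn [DecidableEq ι] (T : Finset ι) :
    Submodule.span ℝ ((fun i => EuclideanSpace.single i (1 : ℝ)) '' (T : Set ι)) ≤
      supportedOn T := by
  rw [Submodule.span_le]
  rintro _ ⟨j, hj, rfl⟩ i hi
  simp [show i ≠ j by rintro rfl; exact hi hj]

end EuclideanSpace

open EuclideanSpace

section DRIP

variable {ι E F : Type*} [NormedAddCommGroup E] [InnerProductSpace ℝ E]
  [NormedAddCommGroup F] [InnerProductSpace ℝ F]

def IsDRIP (D : EuclideanSpace ℝ ι →L[ℝ] E) (M : E →L[ℝ] F) (s : ℕ) (δ : ℝ) : Prop :=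
  ∀ β : EuclideanSpace ℝ ι, (∃ S : Finset ι, S.card ≤ s ∧ β ∈ supportedOn S) →
    (1 - δ) * ‖D β‖ ^ 2 ≤ ‖M (D β)‖ ^ 2 ∧ ‖M (D β)‖ ^ 2 ≤ (1 + δ) * ‖D β‖ ^ 2

variable {D : EuclideanSpace ℝ ι →L[ℝ] E} {M : E →L[ℝ] F} {s : ℕ} {δ : ℝ} {S : Finset ι}

namespace IsDRIP

lemma abs_norm_sq_sub_le (h : IsDRIP D M s δ) (hS : S.card ≤ s) :
    ∀ v ∈ (supportedOn S).map D.toLinearMap, |‖M v‖ ^ 2 - ‖v‖ ^ 2| ≤ δ * ‖v‖ ^ 2 := by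
  rintro _ ⟨β, hβ, rfl⟩
  obtain ⟨hlow, hup⟩ := h β ⟨S, hS, hβ⟩
  rw [ContinuousLinearMap.coe_coe]
  exact abs_le.2 ⟨by linarith, by linarith⟩

lemma nonneg (h : IsDRIP D M s δ) (hS : S.card ≤ s) {v : E}
    (hv : v ∈ (supportedOn S).map D.toLinearMap) (hv0 : v ≠ 0) : 0 ≤ δ := by
  have := (abs_nonneg _).trans (h.abs_norm_sq_sub_le hS v hv)
  exact nonneg_of_mul_nonneg_left this (by positivity)

lemma norm_map_le (h : IsDRIP D M s δ) (hS : S.card ≤ s) {v : E}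
    (hv : v ∈ (supportedOn S).map D.toLinearMap) : ‖M v‖ ≤ √(1 + δ) * ‖v‖ := by
  have hup := (abs_le.1 (h.abs_norm_sq_sub_le hS v hv)).2
  rw [← Real.sqrt_sq (norm_nonneg (M v)), ← Real.sqrt_sq (norm_nonneg v), ← Real.sqrt_mul']
  · exact Real.sqrt_le_sqrt (by linarith)
  · positivity

lemma abs_inner_sub_le (h : IsDRIP D M s δ) (hS : S.card ≤ s) {v w : E}
    (hv : v ∈ (supportedOn S).map D.toLinearMap) (hw : w ∈ (supportedOn S).map D.toLinearMap) :
    |⟪M v, M w⟫ - ⟪v, w⟫| ≤ δ * (‖v‖ * ‖w‖) :=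
  abs_inner_map_sub_inner_le (h.abs_norm_sq_sub_le hS) hv hw

end IsDRIP

lemma inner_sub_map_eq_zero_of_forall_norm_sub_le {T : Finset ι} {y : F}
    {β : EuclideanSpace ℝ ι} (hβ : β ∈ supportedOn T)
    (hmin : ∀ β' ∈ supportedOn T, ‖y - M (D β)‖ ≤ ‖y - M (D β')‖) {v : E}
    (hv : v ∈ (supportedOn T).map D.toLinearMap) : ⟪y - M (D β), M v⟫ = 0 := by
  obtain ⟨γ, hγ, rfl⟩ := hv
  refine inner_sub_eq_zero_of_forall_norm_sub_le (K := (supportedOn T).map (M ∘L D).toLinearMap)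
    ⟨β, hβ, rfl⟩ ?_ ⟨γ, hγ, rfl⟩
  rintro _ ⟨β', hβ', rfl⟩
  exact hmin β' hβ'

end DRIP

section Projection

variable {F : Type*} [NormedAddCommGroup F] [InnerProductSpace ℝ F] {d n : ℕ}
  (D : EuclideanSpace ℝ (Fin n) →L[ℝ] EuclideanSpace ℝ (Fin d)) (T : Finset (Fin n))
  (v : EuclideanSpace ℝ (Fin d))

lemma projSpan_mem_map_supportedOn : projSpan D T v ∈ (supportedOn T).map D.toLinearMap := by
  have hmem : projSpan D T v ∈
      Submodule.span ℝ ((fun i => D (EuclideanSpace.single i 1)) '' (T : Set (Fin n))) :=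
    Submodule.starProjection_apply_mem _ v
  rw [← Set.image_image D, ← D.coe_coe, Submodule.span_image] at hmem
  exact Submodule.map_mono (span_single_le_supportedOn T) hmem

lemma inner_sub_projSpan_self : ⟪v - projSpan D T v, projSpan D T v⟫ = 0 :=
  Submodule.starProjection_inner_eq_zero v _ (Submodule.starProjection_apply_mem _ v)

lemma real_inner_projSpan_self : ⟪projSpan D T v, v⟫ = ‖projSpan D T v‖ ^ 2 := by
  have := inner_sub_projSpan_self D T v
  rw [inner_sub_left, real_inner_self_eq_norm_sq, real_inner_comm] at this
  linarith

lemma sq_norm_projSpan_le {M : EuclideanSpace ℝ (Fin d) →L[ℝ] F} {s s' : ℕ} {δ δ' : ℝ}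
    (hRIP : IsDRIP D M s δ) (hRIP' : IsDRIP D M s' δ') {S : Finset (Fin n)} (hT : T.card ≤ s)
    (hS : S.card ≤ s') (hTS : T ⊆ S) (hv : v ∈ (supportedOn S).map D.toLinearMap) {r e : F}
    (hMv : M v = e - r) (hr : ∀ w ∈ (supportedOn T).map D.toLinearMap, ⟪r, M w⟫ = 0) :
    ‖projSpan D T v‖ ^ 2 ≤ ‖projSpan D T v‖ * (δ' * ‖v‖ + √(1 + δ) * ‖e‖) := by
  set p := projSpan D T v
  have hp : p ∈ (supportedOn T).map D.toLinearMap := projSpan_mem_map_supportedOn D T v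
  have hp' : p ∈ (supportedOn S).map D.toLinearMap := Submodule.map_mono (supportedOn_mono hTS) hp
  calc ‖p‖ ^ 2 = ⟪p, v⟫ := (real_inner_projSpan_self D T v).symm
    _ ≤ ⟪M p, M v⟫ + δ' * (‖p‖ * ‖v‖) := by
        linarith [(abs_le.1 (hRIP'.abs_inner_sub_le hS hp' hv)).1]
    _ = ⟪M p, e⟫ + δ' * (‖p‖ * ‖v‖) := by
        rw [hMv, inner_sub_right, real_inner_comm r, hr p hp, sub_zero]
    _ ≤ √(1 + δ) * ‖p‖ * ‖e‖ + δ' * (‖p‖ * ‖v‖) := by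
        gcongr
        exact (real_inner_le_norm _ _).trans
          (mul_le_mul_of_nonneg_right (hRIP.norm_map_le hT hp) (norm_nonneg e))
    _ = ‖p‖ * (δ' * ‖v‖ + √(1 + δ) * ‖e‖) := by ring

end Projection

/-- Lemma (SSCoSaMP_xp_bound): if `y = Mx + e`, `M` satisfies the `D`-RIP of orders `3ζk` and
`(3ζ+1)k` with constants `δ₃, δ₃₁ < 1`, `x = Dα` with `α` `k`-sparse, `|T̃| ≤ 3ζk` and `x_p`
is the least-squares solution over support `T̃`, then
`‖x_p − x‖ ≤ ‖Q_{T̃}(x_p − x)‖/√(1−δ₃₁²) + √(1+δ₃)‖e‖/(1−δ₃₁)`, where `Q_{T̃} = I − P_{T̃}`. -/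
theorem stmt10 {d n m k ζ : ℕ} (δ3 δ31 : ℝ) (hδ31 : δ31 < 1)
    (D : EuclideanSpace ℝ (Fin n) →L[ℝ] EuclideanSpace ℝ (Fin d))
    (M : EuclideanSpace ℝ (Fin d) →L[ℝ] EuclideanSpace ℝ (Fin m))
    (hRIP3 : ∀ β : EuclideanSpace ℝ (Fin n),
      (∃ s : Finset (Fin n), s.card ≤ 3 * ζ * k ∧ ∀ i ∉ s, β i = 0) →
      (1 - δ3) * ‖D β‖ ^ 2 ≤ ‖M (D β)‖ ^ 2 ∧ ‖M (D β)‖ ^ 2 ≤ (1 + δ3) * ‖D β‖ ^ 2)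
    (hRIP31 : ∀ β : EuclideanSpace ℝ (Fin n),
      (∃ s : Finset (Fin n), s.card ≤ (3 * ζ + 1) * k ∧ ∀ i ∉ s, β i = 0) →
      (1 - δ31) * ‖D β‖ ^ 2 ≤ ‖M (D β)‖ ^ 2 ∧ ‖M (D β)‖ ^ 2 ≤ (1 + δ31) * ‖D β‖ ^ 2)
    (x xp : EuclideanSpace ℝ (Fin d)) (y e : EuclideanSpace ℝ (Fin m))
    (α αp : EuclideanSpace ℝ (Fin n)) (T Ttil : Finset (Fin n))
    (hT : T.card ≤ k) (hαsupp : ∀ i ∉ T, α i = 0) (hx : x = D α)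
    (hTtil : Ttil.card ≤ 3 * ζ * k)
    (hαpsupp : ∀ i ∉ Ttil, αp i = 0) (hxp : xp = D αp)
    (hmin : ∀ αt : EuclideanSpace ℝ (Fin n), (∀ i ∉ Ttil, αt i = 0) →
      ‖y - M xp‖ ≤ ‖y - M (D αt)‖)
    (hy : y = M x + e) :
    ‖xp - x‖ ≤ (1 / Real.sqrt (1 - δ31 ^ 2)) * ‖(xp - x) - projSpan D Ttil (xp - x)‖ +
      (Real.sqrt (1 + δ3) / (1 - δ31)) * ‖e‖ := by
  have hRIP3 : IsDRIP D M (3 * ζ * k) δ3 := hRIP3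
  have hRIP31 : IsDRIP D M ((3 * ζ + 1) * k) δ31 := hRIP31
  subst hx hxp
  set u := D αp - D α
  have hcard : (Ttil ∪ T).card ≤ (3 * ζ + 1) * k :=
    (Finset.card_union_le _ _).trans (by rw [add_one_mul]; exact add_le_add hTtil hT)
  have hu : u ∈ (supportedOn (Ttil ∪ T)).map D.toLinearMap :=
    ⟨αp - α, (supportedOn (Ttil ∪ T)).sub_mem
      (supportedOn_mono Finset.subset_union_left hαpsupp)
      (supportedOn_mono Finset.subset_union_right hαsupp), map_sub _ _ _⟩
  rcases eq_or_ne u 0 with hu0 | hu0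
  · simp only [u, hu0, map_zero, norm_zero]
    positivity
  have hMu : M u = e - (y - M (D αp)) := by simp only [u, map_sub, hy]; abel
  have hPu := sq_norm_projSpan_le D Ttil u hRIP3 hRIP31 hTtil hcard Finset.subset_union_left hu hMu
    (fun w hw => inner_sub_map_eq_zero_of_forall_norm_sub_le hαpsupp hmin hw)
  calc ‖u‖ ≤ 1 / √(1 - δ31 ^ 2) * ‖u - projSpan D Ttil u‖ + √(1 + δ3) * ‖e‖ / (1 - δ31) :=
        norm_le_of_inner_sub_eq_zero (hRIP31.nonneg hcard hu hu0) hδ31 (by positivity)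
          (inner_sub_projSpan_self D Ttil u) hPu
    _ = _ := by ring
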